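/- For arbitrary L ⊆ (Σ_I × Σ_O)^ω (not necessarily Borel): either there exists a delay function f such that Player I has a winning strategy in Γ_f(L), or Player O has an omnipotent round-counting strategy for L (a function σ : Σ_I^* × ℕ → Σ_O winning in Γ_f(L) for every f). -/
import Mathlib


open scoped Classical MeasureTheory

section DelayGames

variable {I O A B : Type}

/-- `shiftSeq f β = ▷^{f 0 - 1} β 0 ▷^{f 1 - 1} β 1 ⋯`, where the skip symbol `▷`
is modeled by `none` and a letter `b ∈ Σ_O` by `some b`. -/
noncomputable def shiftSeq (f : ℕ → ℕ) (β : ℕ → O) : ℕ → Option O := fun n =>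
  if h : ∃ i, (∑ j ∈ Finset.range (i + 1), f j) = n + 1 then some (β (Nat.find h))
  else none

/-- `shift_f(L) = { (α, shift_f(β)) : (α, β) ∈ L }`. -/
def shiftLang (f : ℕ → ℕ) (L : Set ((ℕ → I) × (ℕ → O))) :
    Set ((ℕ → I) × (ℕ → Option O)) :=
  {p | ∃ β : ℕ → O, (p.1, β) ∈ L ∧ p.2 = shiftSeq f β}

/-- The morphism `h` erasing the skip symbol, applied to an infinite word
(meaningful when the word has infinitely many non-skip letters). -/
noncomputable def eraseSkips [Inhabited O] (β : ℕ → Option O) : ℕ → O := fun n =>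
  (β (Nat.nth (fun k => (β k).isSome) n)).getD default

/-- `skip(L) = ⋃_f shift_f(L) = { (α,β) : β has infinitely many non-▷ letters and (α, h β) ∈ L }`. -/
def skipLang [Inhabited O] (L : Set ((ℕ → I) × (ℕ → O))) :
    Set ((ℕ → I) × (ℕ → Option O)) :=
  {p | {k | (p.2 k).isSome}.Infinite ∧ (p.1, eraseSkips p.2) ∈ L}

/-- A play of a Gale-Stewart game is consistent with the Player O strategy `σ`. -/
def gsConsO (σ : List A → B) (α : ℕ → A) (β : ℕ → B) : Prop :=
  ∀ i, β i = σ (List.ofFn fun j : Fin (i + 1) => α j)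

/-- A play of a Gale-Stewart game is consistent with the Player I strategy `τ`. -/
def gsConsI (τ : List B → A) (α : ℕ → A) (β : ℕ → B) : Prop :=
  ∀ i, α i = τ (List.ofFn fun j : Fin i => β j)

/-- `σ` is a winning strategy for Player O in the Gale-Stewart game with winning condition `W`. -/
def gsWinO (W : Set ((ℕ → A) × (ℕ → B))) (σ : List A → B) : Prop :=
  ∀ α β, gsConsO σ α β → (α, β) ∈ W

/-- `τ` is a winning strategy for Player I in the Gale-Stewart game with winning condition `W`. -/
def gsWinI (W : Set ((ℕ → A) × (ℕ → B))) (τ : List B → A) : Prop :=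
  ∀ α β, gsConsI τ α β → (α, β) ∉ W

/-- The infinite word `u 0 · u 1 · u 2 ⋯` built by Player I in a delay game
(well-defined at position `n` as soon as the first `n+1` blocks have more than `n` letters). -/
def outcomeI [Inhabited I] (u : ℕ → List I) : ℕ → I := fun n =>
  ((List.ofFn fun j : Fin (n + 1) => u j).flatten).getD n default

/-- The word `v 0 ⋯ v (i-1)` of the first `i` letters of `v`. -/
def prefixW (v : ℕ → O) (i : ℕ) : List O := List.ofFn fun j : Fin i => v j

/-- The concatenation `u 0 · u 1 ⋯ u i` of Player I's moves up to round `i`. -/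
def inputsUpTo (u : ℕ → List I) (i : ℕ) : List I :=
  (List.ofFn fun j : Fin (i + 1) => u j).flatten

/-- `τ : Σ_O^* → Σ_I^*` is a (syntactically valid) Player I strategy for the
delay game `Γ_f(L)`: it answers with `f i` letters in round `i`. -/
def delayStratI (f : ℕ → ℕ) (τ : List O → List I) : Prop :=
  ∀ w : List O, (τ w).length = f w.length

/-- `τ` is winning for Player I in the delay game `Γ_f(L)`. -/
def delayWinI [Inhabited I] (f : ℕ → ℕ) (L : Set ((ℕ → I) × (ℕ → O)))
    (τ : List O → List I) : Prop :=
  ∀ (u : ℕ → List I) (v : ℕ → O), (∀ i, (u i).length = f i) →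
    (∀ i, u i = τ (prefixW v i)) → (outcomeI u, v) ∉ L

/-- `σ : Σ_I^* → Σ_O` is winning for Player O in the delay game `Γ_f(L)`. -/
def delayWinO [Inhabited I] (f : ℕ → ℕ) (L : Set ((ℕ → I) × (ℕ → O)))
    (σ : List I → O) : Prop :=
  ∀ (u : ℕ → List I) (v : ℕ → O), (∀ i, (u i).length = f i) →
    (∀ i, v i = σ (inputsUpTo u i)) → (outcomeI u, v) ∈ L

/-- A round-counting strategy `σ : Σ_I^* × ℕ → Σ_O` is winning for Player O in `Γ_f(L)`:
in round `i` Player O plays `σ (u 0 ⋯ u i) i`. -/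
def rcWinO [Inhabited I] (f : ℕ → ℕ) (L : Set ((ℕ → I) × (ℕ → O)))
    (σ : List I → ℕ → O) : Prop :=
  ∀ (u : ℕ → List I) (v : ℕ → O), (∀ i, (u i).length = f i) →
    (∀ i, v i = σ (inputsUpTo u i) i) → (outcomeI u, v) ∈ L

/-- An output-tracking strategy `τ : Σ_O^* → Σ_I^ω` is winning for Player I in `Γ_f(L)`:
in round `i` Player I plays the length-`f i` prefix of `τ (v 0 ⋯ v (i-1))`. -/
def otWinI [Inhabited I] (f : ℕ → ℕ) (L : Set ((ℕ → I) × (ℕ → O)))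
    (τ : List O → ℕ → I) : Prop :=
  ∀ (u : ℕ → List I) (v : ℕ → O),
    (∀ i, u i = List.ofFn fun j : Fin (f i) => τ (prefixW v i) j) →
    (outcomeI u, v) ∉ L

/-- A lookahead-counting strategy `τ : Σ_O^* × ℕ → Σ_I^ω` is winning for Player I in `Γ_f(L)`:
in round `i` Player I plays the length-`f i` prefix of `τ (v 0 ⋯ v (i-1), Σ_{j<i} f j)`. -/
def lcWinI [Inhabited I] (f : ℕ → ℕ) (L : Set ((ℕ → I) × (ℕ → O)))
    (τ : List O → ℕ → ℕ → I) : Prop :=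
  ∀ (u : ℕ → List I) (v : ℕ → O),
    (∀ i, u i = List.ofFn fun j : Fin (f i) =>
      τ (prefixW v i) (∑ k ∈ Finset.range i, f k) j) →
    (outcomeI u, v) ∉ L

/-- A history-tracking strategy `τ : Σ_O^* × (ℕ_{>0})^* → Σ_I^ω` is winning for Player I
in `Γ_f(L)`: in round `i` Player I plays the length-`f i` prefix of
`τ (v 0 ⋯ v (i-1), f 0 ⋯ f (i-1))`. -/
def htWinI [Inhabited I] (f : ℕ → ℕ) (L : Set ((ℕ → I) × (ℕ → O)))
    (τ : List O → List ℕ → ℕ → I) : Prop :=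
  ∀ (u : ℕ → List I) (v : ℕ → O),
    (∀ i, u i = List.ofFn fun j : Fin (f i) => τ (prefixW v i) (prefixW f i) j) →
    (outcomeI u, v) ∉ L

/-- `f ⊑ f'` : in every round, the lookahead granted by `f'` is at least that granted by `f`. -/
def delayLE (f f' : ℕ → ℕ) : Prop :=
  ∀ i, (∑ j ∈ Finset.range (i + 1), f j) ≤ ∑ j ∈ Finset.range (i + 1), f' j

end DelayGames

section Aux

variable {I : Type} [Inhabited I]

lemma inputsUpTo_succ (u : ℕ → List I) (i : ℕ) :
    inputsUpTo u (i + 1) = inputsUpTo u i ++ u (i + 1) := by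
  show (List.ofFn fun j : Fin (i + 1 + 1) => u j).flatten = _
  rw [List.ofFn_succ', List.concat_eq_append, List.flatten_append]
  simp [inputsUpTo]

lemma inputsUpTo_prefix (u : ℕ → List I) {j i : ℕ} (h : j ≤ i) :
    inputsUpTo u j <+: inputsUpTo u i := by
  induction i with
  | zero => simpa [Nat.le_zero.mp h] using List.prefix_refl _
  | succ i ih =>
    rcases Nat.lt_or_ge j (i + 1) with hj | hj
    · exact (ih (Nat.lt_succ_iff.mp hj)).trans
        (by rw [inputsUpTo_succ]; exact List.prefix_append _ _)
    · have : j = i + 1 := le_antisymm h hj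
      subst this; exact List.prefix_refl _

lemma inputsUpTo_length (u : ℕ → List I) (i : ℕ) :
    (inputsUpTo u i).length = ∑ j ∈ Finset.range (i + 1), (u j).length := by
  induction i with
  | zero => simp [inputsUpTo]
  | succ i ih => rw [inputsUpTo_succ, List.length_append, ih, ← Finset.sum_range_succ]

lemma inputsUpTo_length_ge (u : ℕ → List I) (hpos : ∀ j, 1 ≤ (u j).length) (i : ℕ) :
    i + 1 ≤ (inputsUpTo u i).length := by
  rw [inputsUpTo_length]
  calc i + 1 = ∑ _j ∈ Finset.range (i + 1), 1 := by simp
    _ ≤ _ := Finset.sum_le_sum fun j _ => hpos j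

lemma outcomeI_eq_getElem (u : ℕ → List I) (hpos : ∀ j, 1 ≤ (u j).length)
    {n i : ℕ} (h : n ≤ i) (hlen : n < (inputsUpTo u i).length) :
    outcomeI u n = (inputsUpTo u i)[n] := by
  have hn : n < (inputsUpTo u n).length :=
    lt_of_lt_of_le (Nat.lt_succ_self n) (inputsUpTo_length_ge u hpos n)
  have : outcomeI u n = (inputsUpTo u n)[n] := by
    show (inputsUpTo u n).getD n default = _
    rw [List.getD_eq_getElem _ _ hn]
  rw [this, (inputsUpTo_prefix u h).getElem hn]

lemma take_inputsUpTo (u : ℕ → List I) (hpos : ∀ j, 1 ≤ (u j).length) (i : ℕ) :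
    (inputsUpTo u i).take (i + 1) = List.ofFn fun j : Fin (i + 1) => outcomeI u j := by
  have hlen := inputsUpTo_length_ge u hpos i
  apply List.ext_getElem
  · simp [Nat.min_eq_left hlen]
  · intro n h1 h2
    simp only [List.getElem_take, List.getElem_ofFn]
    have hn : n < i + 1 := by simpa [Nat.min_eq_left hlen] using h1
    exact (outcomeI_eq_getElem u hpos (Nat.lt_succ_iff.mp hn)
      (lt_of_lt_of_le hn hlen)).symm

lemma flatten_singletons (α : ℕ → I) (n : ℕ) :
    (List.ofFn fun j : Fin n => [α j]).flatten = List.ofFn fun j : Fin n => α j := by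
  induction n with
  | zero => simp
  | succ n ih =>
    rw [List.ofFn_succ' (f := fun j : Fin (n + 1) => [α j]),
      List.ofFn_succ' (f := fun j : Fin (n + 1) => α j), List.concat_eq_append,
      List.concat_eq_append, List.flatten_append]
    simp only [Fin.coe_castSucc, Fin.val_last, List.flatten_cons, List.flatten_nil,
      List.append_nil]
    rw [ih]

lemma outcomeI_singletons (α : ℕ → I) : outcomeI (fun i => [α i]) = α := by
  funext n
  show ((List.ofFn fun j : Fin (n + 1) => [α j]).flatten).getD n default = α n
  rw [flatten_singletons]
  have h : n < (List.ofFn fun j : Fin (n + 1) => α (j : ℕ)).length := by simp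
  rw [List.getD_eq_getElem _ _ h, List.getElem_ofFn]

end Aux

/-- for arbitrary `L` (assuming determinacy of the delay-free game `Γ(L)`):
either some delay function `f` admits a winning strategy for Player I in `Γ_f(L)`,
or Player O has an omnipotent round-counting strategy for `L`. -/
theorem stmt14 {I O : Type} [Fintype I] [Fintype O] [Inhabited I]
    (L : Set ((ℕ → I) × (ℕ → O)))
    (hdet : (∃ σ : List I → O, delayWinO (fun _ => 1) L σ) ∨
      (∃ τ : List O → List I, delayStratI (fun _ => 1) τ ∧ delayWinI (fun _ => 1) L τ)) :
    (∃ f : ℕ → ℕ, (∀ i, 0 < f i) ∧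
        ∃ τ : List O → List I, delayStratI f τ ∧ delayWinI f L τ) ∨
      (∃ σrc : List I → ℕ → O, ∀ f : ℕ → ℕ, (∀ i, 0 < f i) → rcWinO f L σrc) := by
  rcases hdet with ⟨σ, hσ⟩ | ⟨τ, hτ₁, hτ₂⟩
  · right
    refine ⟨fun w i => σ (w.take (i + 1)), fun f hf u v hlen hv => ?_⟩
    have hpos : ∀ j, 1 ≤ (u j).length := fun j => (hlen j).symm ▸ hf j
    have hu' : ∀ i : ℕ, (([outcomeI u i] : List I)).length = (fun _ : ℕ => 1) i := by simp
    have hinp : ∀ i, inputsUpTo (fun k => [outcomeI u k]) i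
        = List.ofFn fun j : Fin (i + 1) => outcomeI u j := by
      intro i
      show (List.ofFn fun j : Fin (i + 1) => [outcomeI u j]).flatten = _
      exact flatten_singletons (outcomeI u) (i + 1)
    have hv' : ∀ i, v i = σ (inputsUpTo (fun k => [outcomeI u k]) i) := by
      intro i
      rw [hinp i]
      refine (hv i).trans ?_
      show σ ((inputsUpTo u i).take (i + 1)) = _
      rw [take_inputsUpTo u hpos i]
    have := hσ (fun k => [outcomeI u k]) v hu' hv'
    rwa [outcomeI_singletons (outcomeI u)] at this
  · exact Or.inl ⟨fun _ => 1, fun _ => one_pos, τ, hτ₁, hτ₂⟩
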